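/- arXiv:2405.19593 — 10 statements merged into one kernel-verified Lean document; each statement's English description precedes it below -/
import Mathlib

section
/- Let k < l be natural numbers with gcd(k,l) = 1 and k + l odd (equivalently, kl even). Then the sequence a : ℕ → ℝ defined by a(n) = (1 + (-1)^(⌊n/k⌋+1))/2 for 0 ≤ n < l and a(n) = 1 - (a(n-k) + a(n-l))/2 for n ≥ l converges to 1/2 as n → ∞. -/
/-!
Subtracting the limit `1/2` turns the recurrence into `b n = -(b (n - k) + b (n - l)) / 2`, and the
claim is that every solution of this recurrence tends to `0`. Suppose `|b| ≤ M` from some point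
on and `b m > (1 - δ) M`. Since each of the two averaged terms is at least `-M`, both `-b (m - k)`
and `-b (m - l)` exceed `(1 - 2 δ) M`. Walking back from `m` to `m - k l` by `l` steps of length `k`,
or by `k` steps of length `l`, with `δ = 2^{-(l+1)}`, forces `(-1)^l b (m - k l)` and
`(-1)^k b (m - k l)` both to be positive; as `k + l` is odd they have opposite signs. Hence `|b|`
contracts by the factor `1 - 2^{-(l+1)}` over every `l + k l` steps.
-/

open Filter Topology

theorem one_sub_half_pow_mem_Ico (n : ℕ) : 1 - (1 / 2 : ℝ) ^ n ∈ Set.Ico 0 1 :=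
  ⟨sub_nonneg.2 (pow_le_one₀ (by norm_num) (by norm_num)), by simp⟩

def NegMeanRec (k l : ℕ) (b : ℕ → ℝ) : Prop :=
  ∀ n, l ≤ n → b n = -(b (n - k) + b (n - l)) / 2

namespace NegMeanRec

variable {k l : ℕ} {b : ℕ → ℝ}

theorem neg (hb : NegMeanRec k l b) : NegMeanRec k l (-b) := by
  intro n hn
  simp only [Pi.neg_apply, hb n hn]
  ring

theorem abs_le_sum_range (hb : NegMeanRec k l b) (hk : 0 < k) (hl : 0 < l) :
    ∀ n, |b n| ≤ ∑ i ∈ Finset.range l, |b i| := by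
  intro n
  induction n using Nat.strong_induction_on with
  | _ n ih =>
    rcases lt_or_ge n l with hn | hn
    · exact Finset.single_le_sum (fun i _ => abs_nonneg (b i)) (Finset.mem_range.2 hn)
    · have hk' := ih (n - k) (by omega)
      have hl' := ih (n - l) (by omega)
      rw [hb n hn, abs_div, abs_neg, abs_two]
      linarith [abs_add_le (b (n - k)) (b (n - l))]

variable {n₀ : ℕ} {M : ℝ}

theorem lt_neg_of_lt (hb : NegMeanRec k l b) (hkl : k < l) (hM : ∀ m, n₀ ≤ m → |b m| ≤ M)
    {δ : ℝ} {p : ℕ} (hp : n₀ + l ≤ p) (h : (1 - δ) * M < b p) :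
    (1 - 2 * δ) * M < -b (p - k) ∧ (1 - 2 * δ) * M < -b (p - l) := by
  have hbk := (abs_le.1 (hM (p - k) (by omega))).1
  have hbl := (abs_le.1 (hM (p - l) (by omega))).1
  rw [hb p (by omega)] at h
  constructor <;> linarith

theorem lt_neg_one_pow_mul_of_lt (hkl : k < l) {s : ℕ} (hs : s = k ∨ s = l) (j : ℕ) :
    ∀ {b : ℕ → ℝ}, NegMeanRec k l b → (∀ m, n₀ ≤ m → |b m| ≤ M) →
    ∀ {δ : ℝ} {p : ℕ}, n₀ + l + j * s ≤ p → (1 - δ) * M < b p →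
      (1 - 2 ^ j * δ) * M < (-1) ^ j * b (p - j * s) := by
  induction j with
  | zero => intro b _ _ δ p _ h; simpa using h
  | succ j ih =>
    intro b hb hM δ p hp h
    rw [Nat.succ_mul] at hp ⊢
    have hstep : (1 - 2 * δ) * M < (-b) (p - s) := by
      have := hb.lt_neg_of_lt hkl hM (by omega) h
      rcases hs with rfl | rfl
      exacts [this.1, this.2]
    have hM' : ∀ m, n₀ ≤ m → |(-b) m| ≤ M := by simpa using hM
    have hrest := ih hb.neg hM' (by omega) hstep
    rw [show p - s - j * s = p - (j * s + s) by omega] at hrest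
    simp only [Pi.neg_apply] at hrest
    have e₁ : (2 : ℝ) ^ (j + 1) * δ = 2 ^ j * (2 * δ) := by ring
    have e₂ : (-1 : ℝ) ^ (j + 1) * b (p - (j * s + s)) = (-1) ^ j * -b (p - (j * s + s)) := by ring
    rw [e₁, e₂]
    exact hrest

theorem le_contraction_mul (hb : NegMeanRec k l b) (hkl : k < l) (hodd : Odd (k + l))
    (hM0 : 0 ≤ M) (hM : ∀ m, n₀ ≤ m → |b m| ≤ M) {m : ℕ} (hm : n₀ + l + k * l ≤ m) :
    b m ≤ (1 - (1 / 2) ^ (l + 1)) * M := by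
  by_contra! h
  set δ : ℝ := (1 / 2) ^ (l + 1)
  have hl := lt_neg_one_pow_mul_of_lt hkl (Or.inl rfl) l hb hM (by rwa [mul_comm]) h
  have hk := lt_neg_one_pow_mul_of_lt hkl (Or.inr rfl) k hb hM hm h
  rw [mul_comm l k] at hl
  have hδl : (2 : ℝ) ^ l * δ = 1 / 2 := by
    simp only [δ, pow_succ, ← mul_assoc, ← mul_pow]
    norm_num
  have hδk : (2 : ℝ) ^ k * δ ≤ 1 / 2 :=
    hδl ▸ mul_le_mul_of_nonneg_right (pow_le_pow_right₀ one_le_two hkl.le) (by positivity)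
  have hsign : (-1 : ℝ) ^ k * b (m - k * l) = -((-1) ^ l * b (m - k * l)) := by
    have hprod : (-1 : ℝ) ^ k * (-1) ^ l = -1 := by rw [← pow_add, hodd.neg_one_pow]
    have hsq : (-1 : ℝ) ^ l * (-1) ^ l = 1 := by rw [← mul_pow]; norm_num
    linear_combination (b (m - k * l)) * ((-1) ^ l * hprod - (-1) ^ k * hsq)
  rw [hδl] at hl
  rw [hsign] at hk
  linarith [mul_le_mul_of_nonneg_right hδk hM0]

theorem abs_le_contraction_mul (hb : NegMeanRec k l b) (hkl : k < l) (hodd : Odd (k + l))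
    (hM0 : 0 ≤ M) (hM : ∀ m, n₀ ≤ m → |b m| ≤ M) {m : ℕ} (hm : n₀ + l + k * l ≤ m) :
    |b m| ≤ (1 - (1 / 2) ^ (l + 1)) * M := by
  have hM' : ∀ m, n₀ ≤ m → |(-b) m| ≤ M := by simpa using hM
  have hneg := hb.neg.le_contraction_mul hkl hodd hM0 hM' hm
  rw [Pi.neg_apply] at hneg
  exact abs_le.2 ⟨by linarith, hb.le_contraction_mul hkl hodd hM0 hM hm⟩

theorem abs_le_contraction_pow_mul (hb : NegMeanRec k l b) (hkl : k < l) (hodd : Odd (k + l))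
    (hM0 : 0 ≤ M) (hM : ∀ m, |b m| ≤ M) (j : ℕ) {m : ℕ} (hm : j * (l + k * l) ≤ m) :
    |b m| ≤ (1 - (1 / 2) ^ (l + 1)) ^ j * M := by
  have hγ := (one_sub_half_pow_mem_Ico (l + 1)).1
  induction j generalizing m with
  | zero => simpa using hM m
  | succ j ih =>
    rw [pow_succ', mul_assoc]
    refine hb.abs_le_contraction_mul hkl hodd (by positivity) (fun m' hm' => ih hm') ?_
    rw [Nat.succ_mul] at hm
    omega

theorem tendsto_zero (hb : NegMeanRec k l b) (hk : 0 < k) (hkl : k < l) (hodd : Odd (k + l)) :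
    Tendsto b atTop (𝓝 0) := by
  set M := ∑ i ∈ Finset.range l, |b i|
  set N := l + k * l
  have hM0 : 0 ≤ M := Finset.sum_nonneg fun i _ => abs_nonneg (b i)
  have hM := hb.abs_le_sum_range hk (hk.trans hkl)
  obtain ⟨hγ0, hγ⟩ := one_sub_half_pow_mem_Ico (l + 1)
  have hdecay : Tendsto (fun m => (1 - (1 / 2 : ℝ) ^ (l + 1)) ^ (m / N) * M) atTop (𝓝 0) := by
    simpa using ((tendsto_pow_atTop_nhds_zero_of_lt_one hγ0 hγ).comp
      (Nat.tendsto_div_const_atTop (by omega))).mul_const M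
  refine squeeze_zero_norm (fun m => ?_) hdecay
  exact hb.abs_le_contraction_pow_mul hkl hodd hM0 hM (m / N) (Nat.div_mul_le_self m N)

end NegMeanRec

theorem stmt0_general (k l : ℕ) (hk : 1 ≤ k) (hkl : k < l)
    (hodd : Odd (k + l)) (a : ℕ → ℝ)
    (h1 : ∀ n, l ≤ n → a n = 1 - (a (n - k) + a (n - l)) / 2) :
    Tendsto a atTop (nhds (1 / 2)) := by
  have hrec : NegMeanRec k l (fun n => a n - 1 / 2) := fun n hn => by
    simp only [h1 n hn]
    ring
  exact tendsto_sub_nhds_zero_iff.1 (hrec.tendsto_zero hk hkl hodd)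

theorem stmt0 (k l : ℕ) (hk : 1 ≤ k) (hkl : k < l) (hgcd : Nat.gcd k l = 1)
    (hodd : Odd (k + l)) (a : ℕ → ℝ)
    (h0 : ∀ n < l, a n = (1 + (-1 : ℝ) ^ (n / k + 1)) / 2)
    (h1 : ∀ n, l ≤ n → a n = 1 - (a (n - k) + a (n - l)) / 2) :
    Tendsto a atTop (nhds (1 / 2)) :=
  stmt0_general k l hk hkl hodd a h1
end

section
/- Let k < l be odd natural numbers with gcd(k,l) = 1. Then the sequence a : ℕ → ℝ defined by a(n) = (1 + (-1)^(⌊n/k⌋+1))/2 for 0 ≤ n < l and a(n) = 1 - (a(n-k) + a(n-l))/2 for n ≥ l does not converge: there is no real number L such that a(n) → L as n → ∞. -/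
/-!
Put `d n = (-1)^n (1/2 - a n)`. Since `l` is odd and `m = l - k` is even, the recurrence becomes
`2 d(n + l) = d(n + m) + d n`, which makes `S n = Σ_{i<l} d(n+i) + Σ_{i<k} d(n+m+i)` independent of `n`.
If `a` converged, `d n + d (n+1) = (-1)^n (a (n+1) - a n)` would tend to `0`, hence so would
`S n + S (n+1) = 2 S 0`, forcing `S 0 = 0`. But on `[0, l)` we have `2 d n = (-1)^(n + ⌊n/k⌋)`, a
`k`-periodic sign pattern whose windows of length `k` sum to `1` and whose partial sums are
nonnegative, so `2 S 0 ≥ 1`.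
-/

open Filter Finset Topology

def windowSum {M : Type*} [AddCommMonoid M] (f : ℕ → M) (w n : ℕ) : M :=
  ∑ i ∈ range w, f (n + i)

section windowSum

variable {M : Type*}

section AddCommMonoid

variable [AddCommMonoid M] (f : ℕ → M)

lemma windowSum_add_length (u v n : ℕ) :
    windowSum f (u + v) n = windowSum f u n + windowSum f v (n + u) := by
  simp only [windowSum, sum_range_add, add_assoc]

lemma windowSum_succ_add (w n : ℕ) :
    windowSum f w (n + 1) + f n = windowSum f w n + f (n + w) := by
  rw [windowSum, windowSum, ← sum_range_succ (fun i => f (n + i)), sum_range_succ', add_zero]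
  simp only [add_right_comm n 1, add_assoc]

lemma windowSum_add_windowSum_succ (w n : ℕ) :
    windowSum f w n + windowSum f w (n + 1) = windowSum (fun j => f j + f (j + 1)) w n := by
  simp only [windowSum, ← sum_add_distrib, add_right_comm n 1]

lemma tendsto_windowSum_zero [TopologicalSpace M] [ContinuousAdd M] {f : ℕ → M}
    (hf : Tendsto f atTop (𝓝 0)) (w : ℕ) :
    Tendsto (windowSum f w) atTop (𝓝 0) := by
  show Tendsto (fun n => ∑ i ∈ range w, f (n + i)) atTop _
  simpa using tendsto_finsetSum (range w) fun i _ => hf.comp (tendsto_add_atTop_nat i)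

end AddCommMonoid

lemma Function.Periodic.windowSum_eq [AddCancelCommMonoid M] {f : ℕ → M} {w : ℕ}
    (hf : Function.Periodic f w) (n : ℕ) : windowSum f w n = windowSum f w 0 := by
  induction n with
  | zero => rfl
  | succ n ih =>
    have h := windowSum_succ_add f w n
    rw [hf n] at h
    exact ih ▸ add_right_cancel h

end windowSum

section recurrence

variable {M : Type*}

def recurrenceInvariant [AddCommMonoid M] (d : ℕ → M) (m k n : ℕ) : M :=
  windowSum d (m + k) n + windowSum d k (n + m)

lemma recurrenceInvariant_eq [AddCancelCommMonoid M] {d : ℕ → M} {m k : ℕ}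
    (hrec : ∀ n, 2 • d (n + m + k) = d (n + m) + d n) (n : ℕ) :
    recurrenceInvariant d m k n = recurrenceInvariant d m k 0 := by
  induction n with
  | zero => rfl
  | succ n ih =>
    rw [← ih]
    apply add_right_cancel (b := d (n + m) + d n)
    have h₁ := windowSum_succ_add d (m + k) n
    have h₂ := windowSum_succ_add d k (n + m)
    rw [← add_assoc] at h₁
    calc recurrenceInvariant d m k (n + 1) + (d (n + m) + d n)
        = (windowSum d (m + k) (n + 1) + d n) + (windowSum d k (n + m + 1) + d (n + m)) := by
          rw [recurrenceInvariant, add_right_comm n 1 m]; abel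
      _ = recurrenceInvariant d m k n + 2 • d (n + m + k) := by
          rw [h₁, h₂, recurrenceInvariant, two_nsmul]; abel
      _ = recurrenceInvariant d m k n + (d (n + m) + d n) := by rw [hrec]

lemma recurrenceInvariant_eq_zero {d : ℕ → ℝ} {m k : ℕ}
    (hrec : ∀ n, 2 • d (n + m + k) = d (n + m) + d n)
    (hd : Tendsto (fun n => d n + d (n + 1)) atTop (𝓝 0)) :
    recurrenceInvariant d m k 0 = 0 := by
  have hconst : ∀ n, recurrenceInvariant (fun j => d j + d (j + 1)) m k n
      = 2 * recurrenceInvariant d m k 0 := fun n => by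
    have h₁ := recurrenceInvariant_eq hrec n
    have h₂ := recurrenceInvariant_eq hrec (n + 1)
    simp only [recurrenceInvariant, ← windowSum_add_windowSum_succ, add_right_comm n 1 m] at h₁ h₂ ⊢
    linarith
  have hlim : Tendsto (fun n => recurrenceInvariant (fun j => d j + d (j + 1)) m k n)
      atTop (𝓝 0) := by
    simpa [recurrenceInvariant] using (tendsto_windowSum_zero hd (m + k)).add
      ((tendsto_windowSum_zero hd k).comp (tendsto_add_atTop_nat m))
  simp only [hconst] at hlim
  linarith [tendsto_nhds_unique tendsto_const_nhds hlim]

end recurrence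

def altBlockSign (k n : ℕ) : ℝ := (-1) ^ (n + n / k)

section altBlockSign

variable {k : ℕ}

lemma altBlockSign_periodic (hk : Odd k) : Function.Periodic (altBlockSign k) k := fun n => by
  rw [altBlockSign, altBlockSign, Nat.add_div_right n hk.pos, pow_add _ (n + k),
    pow_add _ n k, pow_succ, hk.neg_one_pow, pow_add]
  ring

lemma altBlockSign_of_lt {n : ℕ} (hn : n < k) : altBlockSign k n = (-1) ^ n := by
  rw [altBlockSign, Nat.div_eq_of_lt hn, add_zero]

lemma windowSum_altBlockSign_zero_of_le {s : ℕ} (hs : s ≤ k) :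
    windowSum (altBlockSign k) s 0 = if Even s then 0 else 1 := by
  rw [windowSum, ← neg_one_geom_sum]
  exact sum_congr rfl fun i hi => by
    rw [zero_add, altBlockSign_of_lt (by simp at hi; omega)]

lemma windowSum_altBlockSign_period (hk : Odd k) (n : ℕ) :
    windowSum (altBlockSign k) k n = 1 := by
  rw [(altBlockSign_periodic hk).windowSum_eq, windowSum_altBlockSign_zero_of_le le_rfl,
    if_neg (Nat.not_even_iff_odd.mpr hk)]

lemma windowSum_altBlockSign_nonneg (hk : Odd k) (n : ℕ) :
    0 ≤ windowSum (altBlockSign k) n 0 := by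
  induction n using Nat.strong_induction_on with
  | _ n ih =>
    rcases lt_or_ge n k with hn | hn
    · rw [windowSum_altBlockSign_zero_of_le hn.le]
      split_ifs <;> norm_num
    · obtain ⟨j, rfl⟩ := Nat.exists_eq_add_of_le' hn
      rw [windowSum_add_length, windowSum_altBlockSign_period hk]
      linarith [ih j (by have := hk.pos; omega)]

end altBlockSign

theorem stmt3_general (k l : ℕ) (hk : Odd k) (hl : Odd l) (hkl : k < l)
    (a : ℕ → ℝ)
    (h0 : ∀ n < l, a n = (1 + (-1 : ℝ) ^ (n / k + 1)) / 2)
    (h1 : ∀ n, l ≤ n → a n = 1 - (a (n - k) + a (n - l)) / 2) :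
    ¬ ∃ L : ℝ, Tendsto a atTop (nhds L) := by
  rintro ⟨L, hL⟩
  obtain ⟨m, rfl⟩ : ∃ m, l = m + k := ⟨l - k, by omega⟩
  have hm : Even m := (Nat.odd_add'.mp hl).mp hk
  set d : ℕ → ℝ := fun n => (-1) ^ n * (1 / 2 - a n) with hd
  have hrec : ∀ n, 2 • d (n + m + k) = d (n + m) + d n := fun n => by
    have h := h1 (n + m + k) (by omega)
    rw [show n + m + k - k = n + m by omega, show n + m + k - (m + k) = n by omega] at h
    simp only [hd, two_nsmul, pow_add, hm.neg_one_pow, hk.neg_one_pow, h]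
    ring
  have hdiff : Tendsto (fun n => d n + d (n + 1)) atTop (𝓝 0) := by
    have hstep : Tendsto (fun n => a (n + 1) - a n) atTop (𝓝 0) := by
      simpa using (hL.comp (tendsto_add_atTop_nat 1)).sub hL
    refine squeeze_zero_norm (fun n => le_of_eq ?_) (tendsto_zero_iff_norm_tendsto_zero.mp hstep)
    have hpair : d n + d (n + 1) = (-1) ^ n * (a (n + 1) - a n) := by
      simp only [hd, pow_succ]; ring
    rw [hpair, norm_mul, norm_pow, norm_neg, norm_one, one_pow, one_mul]
  have hinit : ∀ w n, n + w ≤ m + k → windowSum d w n = windowSum (altBlockSign k) w n / 2 :=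
    fun w n h => by
      rw [windowSum, windowSum, sum_div]
      refine sum_congr rfl fun i hi => ?_
      simp only [hd, h0 (n + i) (by simp at hi; omega), altBlockSign, pow_add, pow_one]
      ring
  have key := recurrenceInvariant_eq_zero hrec hdiff
  rw [recurrenceInvariant, hinit _ _ (by omega), hinit _ _ (by omega)] at key
  linarith [windowSum_altBlockSign_nonneg hk (m + k), windowSum_altBlockSign_period hk (0 + m)]

theorem stmt3 (k l : ℕ) (hk : Odd k) (hl : Odd l) (hkl : k < l)
    (hgcd : Nat.gcd k l = 1) (a : ℕ → ℝ)
    (h0 : ∀ n < l, a n = (1 + (-1 : ℝ) ^ (n / k + 1)) / 2)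
    (h1 : ∀ n, l ≤ n → a n = 1 - (a (n - k) + a (n - l)) / 2) :
    ¬ ∃ L : ℝ, Tendsto a atTop (nhds L) :=
  stmt3_general k l hk hl hkl a h0 h1
end

section
/- Let k < l be natural numbers with 1 ≤ k and gcd(k,l) = 1. Every complex root z of the polynomial χ(x) = 2x^l + x^{l-k} + 1 satisfies |z| < 1, except possibly z = -1, and z = -1 is a root only in the case where both k and l are odd. -/
/-!
If `‖z‖ ≥ 1` and `2 z^l + z^(l-k) + 1 = 0`, then `2‖z‖^l ≤ ‖z‖^(l-k) + 1 ≤ ‖z‖^l + 1`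
forces `‖z‖^l = ‖z^(l-k)‖ = 1` and equality in the triangle inequality for `z^(l-k) + 1`,
so `z^(l-k) = 1` and `z^l = -1`. Hence `z^k = z^l = -1`, and `gcd(k, l) = 1` gives `z = -1`.
-/

theorem eq_neg_one_of_pow_eq_neg_one_of_coprime {R : Type*} [Ring R] [NoZeroDivisors R] {z : R}
    {k l : ℕ} (hkl : Nat.Coprime k l) (hk : z ^ k = -1) (hl : z ^ l = -1) : z = -1 := by
  have hsq : z ^ 2 = 1 := by
    have h2 : Nat.gcd (2 * k) (2 * l) = 2 := by rw [Nat.gcd_mul_left, hkl]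
    rw [← h2, pow_gcd_eq_one, pow_mul', pow_mul', hk, hl]
    norm_num
  rcases mul_self_eq_one_iff.mp (sq z ▸ hsq) with rfl | rfl
  · rwa [one_pow] at hk
  · rfl

theorem Complex.pow_eq_neg_one_of_two_mul_pow_add_pow_add_one_eq_zero {z : ℂ} {l m : ℕ}
    (hz : 1 ≤ ‖z‖) (hml : m ≤ l) (h : 2 * z ^ l + z ^ m + 1 = 0) :
    z ^ l = -1 ∧ z ^ m = 1 := by
  have hnorm : ‖z ^ m + 1‖ = 2 * ‖z‖ ^ l := by
    rw [show z ^ m + 1 = -(2 * z ^ l) by linear_combination h, norm_neg, norm_mul, norm_pow]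
    norm_num
  have hle : 2 * ‖z‖ ^ l ≤ ‖z‖ ^ m + 1 := by
    simpa [hnorm, norm_pow] using norm_add_le (z ^ m) 1
  have hm_one : 1 ≤ ‖z‖ ^ m := one_le_pow₀ hz
  have hml' : ‖z‖ ^ m ≤ ‖z‖ ^ l := pow_le_pow_right₀ hz hml
  have hzm : ‖z ^ m‖ = 1 := by rw [norm_pow]; linarith
  have hzm_one : z ^ m = 1 := by
    refine eq_of_norm_eq_of_norm_add_eq (by simpa using hzm) ?_
    rw [hnorm, hzm, norm_one]
    linarith
  exact ⟨by linear_combination h / 2 - hzm_one / 2, hzm_one⟩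

theorem two_mul_neg_one_pow_add_neg_one_pow_add_one_eq_zero_iff {l m : ℕ} :
    2 * (-1 : ℂ) ^ l + (-1) ^ m + 1 = 0 ↔ Odd l ∧ Even m := by
  rcases Nat.even_or_odd l with hl | hl <;> rcases Nat.even_or_odd m with hm | hm <;>
    norm_num [hl.neg_one_pow, hm.neg_one_pow] <;> grind

theorem stmt4_general (k l : ℕ) (hkl : k < l) (hgcd : Nat.gcd k l = 1) :
    (∀ z : ℂ, 2 * z ^ l + z ^ (l - k) + 1 = 0 → z = -1 ∨ ‖z‖ < 1) ∧
    ((2 * (-1 : ℂ) ^ l + (-1 : ℂ) ^ (l - k) + 1 = 0) → Odd k ∧ Odd l) := by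
  refine ⟨fun z h => or_iff_not_imp_right.mpr fun hz => ?_, fun h => ?_⟩
  · obtain ⟨hzl, hzlk⟩ := Complex.pow_eq_neg_one_of_two_mul_pow_add_pow_add_one_eq_zero
      (not_lt.mp hz) (Nat.sub_le l k) h
    have hzk : z ^ k = -1 := by
      rwa [← Nat.add_sub_of_le hkl.le, pow_add, hzlk, mul_one] at hzl
    exact eq_neg_one_of_pow_eq_neg_one_of_coprime hgcd hzk hzl
  · obtain ⟨hl, hlk⟩ := two_mul_neg_one_pow_add_neg_one_pow_add_one_eq_zero_iff.mp h
    exact ⟨Nat.sub_sub_self hkl.le ▸ Nat.Odd.sub_even (Nat.sub_le l k) hl hlk, hl⟩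

theorem stmt4 (k l : ℕ) (hk : 1 ≤ k) (hkl : k < l) (hgcd : Nat.gcd k l = 1) :
    (∀ z : ℂ, 2 * z ^ l + z ^ (l - k) + 1 = 0 → z = -1 ∨ ‖z‖ < 1) ∧
    ((2 * (-1 : ℂ) ^ l + (-1 : ℂ) ^ (l - k) + 1 = 0) → Odd k ∧ Odd l) :=
  stmt4_general k l hkl hgcd
end

section
/- Let k < l be odd natural numbers with gcd(k,l) = 1. Then all complex roots of χ(x) = 2x^l + x^{l-k} + 1 are simple; that is, there is no complex number z with 2z^l + z^{l-k} + 1 = 0 and 2l·z^{l-1} + (l-k)·z^{l-k-1} = 0 simultaneously. -/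
theorem stmt5 (k l : ℕ) (hk : Odd k) (hl : Odd l) (hkl : k < l)
    (hgcd : Nat.gcd k l = 1) :
    ¬ ∃ z : ℂ, 2 * z ^ l + z ^ (l - k) + 1 = 0 ∧
      2 * (l : ℂ) * z ^ (l - 1) + ((l - k : ℕ) : ℂ) * z ^ (l - k - 1) = 0 := by
  rintro ⟨z, h1, h2⟩
  have hk0 : 0 < k := hk.pos
  have hl0 : 0 < l := hl.pos
  have hn0 : 0 < l - k := Nat.sub_pos_of_lt hkl
  have hkc : ((k : ℂ)) ≠ 0 := Nat.cast_ne_zero.mpr hk0.ne'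
  have hlc : ((l : ℂ)) ≠ 0 := Nat.cast_ne_zero.mpr hl0.ne'
  have hnc : ((l : ℂ)) - (k : ℂ) ≠ 0 := by
    have : ((l - k : ℕ) : ℂ) ≠ 0 := Nat.cast_ne_zero.mpr hn0.ne'
    rwa [Nat.cast_sub hkl.le] at this
  have hz : z ≠ 0 := by
    rintro rfl
    simp [zero_pow hl0.ne', zero_pow hn0.ne'] at h1
  have hcast : ((l - k : ℕ) : ℂ) = (l : ℂ) - (k : ℂ) := by
    push_cast [Nat.cast_sub hkl.le]; ring
  have h2' : 2 * (l : ℂ) * z ^ l + ((l : ℂ) - (k : ℂ)) * z ^ (l - k) = 0 := by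
    have h := congrArg (· * z) h2
    simp only [add_mul, zero_mul, mul_assoc, ← pow_succ] at h
    rw [Nat.sub_add_cancel hl0, Nat.sub_add_cancel hn0, hcast] at h
    linear_combination h
  -- solve linear system
  have hA : 2 * (k : ℂ) * z ^ l = (l : ℂ) - (k : ℂ) := by
    linear_combination h2' - ((l : ℂ) - (k : ℂ)) * h1
  have hB : (k : ℂ) * z ^ (l - k) = -(l : ℂ) := by
    have h : ((l : ℂ) - (k : ℂ)) * ((k : ℂ) * z ^ (l - k)) = ((l : ℂ) - (k : ℂ)) * (-(l : ℂ)) := by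
      linear_combination (k : ℂ) * h2' - (l : ℂ) * hA
    exact mul_left_cancel₀ hnc h
  have hzk : 2 * (l : ℂ) * z ^ k = (k : ℂ) - (l : ℂ) := by
    have hsplit : z ^ l = z ^ k * z ^ (l - k) := by
      rw [← pow_add, Nat.add_sub_cancel' hkl.le]
    rw [hsplit] at hA
    linear_combination 2 * z ^ k * hB - hA
  -- z^k and z^l are real, so z is real (gcd = 1)
  have hconjk : (starRingEnd ℂ) (z ^ k) = z ^ k := by
    have : z ^ k = ((k : ℂ) - (l : ℂ)) / (2 * (l : ℂ)) := by
      field_simp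
      linear_combination hzk
    rw [this]
    simp [map_div₀, map_sub, map_mul, map_ofNat]
  have hconjl : (starRingEnd ℂ) (z ^ l) = z ^ l := by
    have : z ^ l = ((l : ℂ) - (k : ℂ)) / (2 * (k : ℂ)) := by
      field_simp
      linear_combination hA
    rw [this]
    simp [map_div₀, map_sub, map_mul, map_ofNat]
  have hzkne : z ^ k ≠ 0 := pow_ne_zero _ hz
  have hzlne : z ^ l ≠ 0 := pow_ne_zero _ hz
  set w : ℂ := (starRingEnd ℂ) z * z⁻¹ with hw
  have hwk : w ^ k = 1 := by
    rw [hw, mul_pow, inv_pow, ← map_pow, hconjk]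
    exact mul_inv_cancel₀ hzkne
  have hwl : w ^ l = 1 := by
    rw [hw, mul_pow, inv_pow, ← map_pow, hconjl]
    exact mul_inv_cancel₀ hzlne
  have hw1 : w = 1 := by
    have hd : orderOf w ∣ Nat.gcd k l :=
      Nat.dvd_gcd (orderOf_dvd_of_pow_eq_one hwk) (orderOf_dvd_of_pow_eq_one hwl)
    rw [hgcd, Nat.dvd_one] at hd
    exact orderOf_eq_one_iff.mp hd
  have hconjz : (starRingEnd ℂ) z = z := by
    have := congrArg (· * z) hw1
    simpa [hw, mul_assoc, inv_mul_cancel₀ hz] using this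
  have him : z.im = 0 := Complex.conj_eq_iff_im.mp hconjz
  have hre : z = ((z.re : ℝ) : ℂ) := by
    exact (Complex.conj_eq_iff_re.mp hconjz).symm
  set x : ℝ := z.re with hx
  -- real inequalities
  have hrealk : 2 * (l : ℝ) * x ^ k = (k : ℝ) - (l : ℝ) := by
    have := hzk
    rw [hre] at this
    exact_mod_cast this
  have hreall : 2 * (k : ℝ) * x ^ l = (l : ℝ) - (k : ℝ) := by
    have := hA
    rw [hre] at this
    exact_mod_cast this
  have hklR : (k : ℝ) < (l : ℝ) := Nat.cast_lt.mpr hkl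
  have hxneg : x < 0 := by
    have hxk : x ^ k < 0 := by
      nlinarith [(Nat.cast_pos.mpr hl0 : (0:ℝ) < l)]
    exact hk.pow_neg_iff.mp hxk
  have hxpos : 0 < x := by
    have hxl : 0 < x ^ l := by
      nlinarith [(Nat.cast_pos.mpr hk0 : (0:ℝ) < k)]
    exact hl.pow_pos_iff.mp hxl
  linarith
end

section
/- Let k < l be odd natural numbers and let a_j = (1 + (-1)^(⌊j/k⌋+1))/2 for 0 ≤ j ≤ l-1, where ⌊j/k⌋ denotes integer division. Then the alternating sum ∑_{i=0}^{l-1} (-1)^i a_i equals -(1/2)·⌊l/k⌋ if ⌊l/k⌋ is even, and equals -(1/2)·(⌊l/k⌋ - 1) if ⌊l/k⌋ is odd. -/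
/-!
On the block `[q k, (q + 1) k)` the value `a_j` is `1` when `q` is odd and `0` when `q` is even.
Since `k` is odd, a full block with `q` odd contributes `-1` to the alternating sum, so the
`⌊l/k⌋` complete blocks contribute `-⌊⌊l/k⌋/2⌋`. The incomplete block of length `l mod k`
contributes nothing: either `⌊l/k⌋` is even, or it is odd and then `l mod k` is even because
`l` is odd, so its alternating signs cancel.
-/

open Finset

noncomputable def initialValue (k j : ℕ) : ℝ := (1 + (-1) ^ (j / k + 1)) / 2

lemma initialValue_eq (k j : ℕ) : initialValue k j = if Even (j / k) then 0 else 1 := by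
  rcases Nat.even_or_odd (j / k) with h | h
  · simp [initialValue, h, h.add_one.neg_one_pow]
  · simp [initialValue, Nat.not_even_iff_odd.mpr h, h.add_one.neg_one_pow]

lemma mul_add_div_of_lt {k t : ℕ} (q : ℕ) (ht : t < k) : (q * k + t) / k = q := by
  rw [add_comm, Nat.add_mul_div_right _ _ (by omega), Nat.div_eq_of_lt ht, zero_add]

lemma sum_Ico_mul_add_initialValue {k r : ℕ} (hk : Odd k) (q : ℕ) (hr : r ≤ k) :
    ∑ i ∈ Ico (q * k) (q * k + r), (-1 : ℝ) ^ i * initialValue k i =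
      if Even q then 0 else -∑ t ∈ range r, (-1 : ℝ) ^ t := by
  have hterm : ∀ t ∈ range r, (-1 : ℝ) ^ (q * k + t) * initialValue k (q * k + t) =
      if Even q then 0 else -(-1) ^ t := by
    intro t ht
    rw [initialValue_eq, mul_add_div_of_lt q (by simp at ht; omega), pow_add]
    rcases Nat.even_or_odd q with hq | hq
    · simp [hq]
    · simp [Nat.not_even_iff_odd.mpr hq, (hq.mul hk).neg_one_pow]
  rw [sum_Ico_eq_sum_range, add_tsub_cancel_left, sum_congr rfl hterm]
  split_ifs <;> simp [sum_neg_distrib]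

lemma sum_range_mul_initialValue {k : ℕ} (hk : Odd k) (q : ℕ) :
    ∑ i ∈ range (q * k), (-1 : ℝ) ^ i * initialValue k i = -((q / 2 : ℕ) : ℝ) := by
  induction q with
  | zero => simp
  | succ q ih =>
    rw [add_one_mul, ← sum_range_add_sum_Ico _ (Nat.le_add_right _ k), ih,
      sum_Ico_mul_add_initialValue hk q le_rfl, neg_one_geom_sum,
      if_neg (Nat.not_even_iff_odd.mpr hk)]
    rcases Nat.even_or_odd q with hq | hq
    · rw [if_pos hq, show (q + 1) / 2 = q / 2 by rw [Nat.even_iff] at hq; omega]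
      ring
    · rw [if_neg (Nat.not_even_iff_odd.mpr hq),
        show (q + 1) / 2 = q / 2 + 1 by rw [Nat.odd_iff] at hq; omega]
      push_cast
      ring

lemma cast_div_two (n : ℕ) :
    ((n / 2 : ℕ) : ℝ) = if Even n then 1 / 2 * (n : ℝ) else 1 / 2 * ((n : ℝ) - 1) := by
  split_ifs with hn
  · obtain ⟨m, rfl⟩ := hn
    rw [show (m + m) / 2 = m by omega]
    push_cast
    ring
  · obtain ⟨m, rfl⟩ := Nat.not_even_iff_odd.mp hn
    rw [show (2 * m + 1) / 2 = m by omega]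
    push_cast
    ring

theorem stmt6_general (k l : ℕ) (hk : Odd k) (hl : Odd l) :
    ∑ i ∈ Finset.range l, (-1 : ℝ) ^ i * ((1 + (-1 : ℝ) ^ (i / k + 1)) / 2) =
      if Even (l / k) then -(1 / 2) * ((l / k : ℕ) : ℝ)
      else -(1 / 2) * (((l / k : ℕ) : ℝ) - 1) := by
  change ∑ i ∈ range l, (-1 : ℝ) ^ i * initialValue k i = _
  set q := l / k
  set r := l % k
  have hl_eq : q * k + r = l := Nat.div_add_mod' l k
  have htail : ∑ i ∈ Ico (q * k) (q * k + r), (-1 : ℝ) ^ i * initialValue k i = 0 := by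
    rw [sum_Ico_mul_add_initialValue hk q (Nat.mod_lt l hk.pos).le]
    split_ifs with hq
    · rfl
    · have hr : Even r := by
        rw [← hl_eq, Nat.odd_add, Nat.odd_mul] at hl
        exact hl.mp ⟨Nat.not_even_iff_odd.mp hq, hk⟩
      rw [neg_one_geom_sum, if_pos hr, neg_zero]
  rw [← hl_eq, ← sum_range_add_sum_Ico _ (Nat.le_add_right _ r), sum_range_mul_initialValue hk,
    htail, add_zero, cast_div_two]
  split_ifs <;> ring

theorem stmt6 (k l : ℕ) (hk : Odd k) (hl : Odd l) (hkl : k < l) :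
    ∑ i ∈ Finset.range l, (-1 : ℝ) ^ i * ((1 + (-1 : ℝ) ^ (i / k + 1)) / 2) =
      if Even (l / k) then -(1 / 2) * ((l / k : ℕ) : ℝ)
      else -(1 / 2) * (((l / k : ℕ) : ℝ) - 1) :=
  stmt6_general k l hk hl
end

section
/- Let k < l be odd natural numbers with gcd(k,l) = 1. Then α₁ < 0; in particular α₁ ≠ 0 for every choice of coprime odd k < l. -/
theorem stmt8 (k l : ℕ) (hk : Odd k) (hl : Odd l) (hkl : k < l)
    (hgcd : Nat.gcd k l = 1) (α : ℝ)
    (hα : α = if Even (l / k) then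
        (1 / ((l : ℝ) + (k : ℝ))) *
          (-(1 / 2) * ((l / k : ℕ) : ℝ) - (k : ℝ) * (((l / k : ℕ) : ℝ) + 1) + (l : ℝ) - 1)
      else
        (1 / ((l : ℝ) + (k : ℝ))) *
          (-(1 / 2) * (((l / k : ℕ) : ℝ) - 1) - (l : ℝ) + (k : ℝ) * ((l / k : ℕ) : ℝ) - 1)) :
    α < 0 ∧ α ≠ 0 := by
  have hk0 : 0 < k := hk.pos
  have hl0 : 0 < l := hl.pos
  have hq1 : 1 ≤ l / k := Nat.one_le_div_iff hk0 |>.mpr hkl.le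
  have hmod : k * (l / k) + l % k = l := Nat.div_add_mod l k
  have hr : l % k < k := Nat.mod_lt _ hk0
  -- real versions
  have hmodR : (k : ℝ) * ((l / k : ℕ) : ℝ) + ((l % k : ℕ) : ℝ) = (l : ℝ) := by
    exact_mod_cast congrArg (Nat.cast : ℕ → ℝ) hmod
  have hrR : ((l % k : ℕ) : ℝ) < (k : ℝ) := by exact_mod_cast hr
  have hr0 : (0 : ℝ) ≤ ((l % k : ℕ) : ℝ) := Nat.cast_nonneg _
  have hq1R : (1 : ℝ) ≤ ((l / k : ℕ) : ℝ) := by exact_mod_cast hq1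
  have hpos : (0 : ℝ) < (l : ℝ) + (k : ℝ) := by positivity
  have hlt : α < 0 := by
    rw [hα]
    split_ifs with h
    · apply mul_neg_of_pos_of_neg (by positivity)
      nlinarith
    · apply mul_neg_of_pos_of_neg (by positivity)
      nlinarith
  exact ⟨hlt, ne_of_lt hlt⟩
end

section
/- Let t ≥ 2 and let k_1 < k_2 < ... < k_t be natural numbers with 1 ≤ k_1 and gcd(k_1, ..., k_t) = 1. Every complex root z of the polynomial χ_S(x) = t·x^{k_t} + ∑_{i=1}^{t-1} x^{k_t - k_i} + 1 satisfies |z| < 1, except possibly z = -1, and z = -1 is a root only in the case where all of k_1, ..., k_t are odd. -/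
/-!
Put `w = z⁻¹`. Dividing `χ_S(z) = 0` by `z ^ k_t` gives `∑ᵢ w ^ kᵢ = -t`. If `‖z‖ ≥ 1`, each of
the `t` summands lies in the closed unit disc, so all of them must equal `-1`. Then `w ^ (2 kᵢ) = 1`
for every `i`, hence `w ^ 2 = 1` because `gcd kᵢ = 1`, and `w ^ kᵢ = -1` rules out `w = 1`. So
`z = -1`, and `(-1) ^ kᵢ = -1` says that every `kᵢ` is odd.
-/

open Finset

namespace Complex

lemma eq_neg_one_of_norm_le_one_of_re_le {u : ℂ} (hu : ‖u‖ ≤ 1) (hre : u.re ≤ -1) : u = -1 := by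
  have hre' : u.re = -1 := by linarith [neg_abs_le u.re, abs_re_le_norm u]
  have him : u.im = 0 := by
    rw [← abs_re_eq_norm]
    exact le_antisymm (abs_re_le_norm u) (by rw [hre']; simpa using hu)
  exact Complex.ext (by simpa using hre') (by simpa using him)

lemma eq_neg_one_of_sum_eq_neg_card {ι : Type*} {s : Finset ι} {u : ι → ℂ}
    (hu : ∀ i ∈ s, ‖u i‖ ≤ 1) (hsum : ∑ i ∈ s, u i = -(#s : ℂ)) : ∀ i ∈ s, u i = -1 := by
  have hle : ∀ i ∈ s, (-1 : ℝ) ≤ (u i).re := fun i hi => by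
    linarith [neg_abs_le (u i).re, abs_re_le_norm (u i), hu i hi]
  have hre : ∑ i ∈ s, (-1 : ℝ) = ∑ i ∈ s, (u i).re := by
    rw [← re_sum, hsum]
    simp
  intro i hi
  exact eq_neg_one_of_norm_le_one_of_re_le (hu i hi)
    ((sum_eq_sum_iff_of_le hle).1 hre i hi).ge

end Complex

lemma eq_neg_one_of_forall_pow_eq_neg_one {R ι : Type*} [CommRing R] [IsDomain R] {w : R}
    {s : Finset ι} {k : ι → ℕ} (hgcd : s.gcd k = 1) (hw : ∀ i ∈ s, w ^ k i = -1) : w = -1 := by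
  obtain ⟨i, hi⟩ : s.Nonempty := by
    rw [nonempty_iff_ne_empty]
    rintro rfl
    simp at hgcd
  have hdvd : orderOf w ∣ s.gcd fun i => k i * 2 :=
    dvd_gcd fun j hj => orderOf_dvd_of_pow_eq_one (by rw [pow_mul, hw j hj, neg_one_sq])
  rw [Finset.gcd_mul_right, hgcd, one_mul, normalize_eq] at hdvd
  have hsq : w * w = 1 := by rw [← sq]; exact orderOf_dvd_iff_pow_eq_one.1 hdvd
  rcases mul_self_eq_one_iff.1 hsq with rfl | rfl
  · simpa using hw i hi
  · rfl

/-- `χ_S(z)` for `S = {k 1, …, k t}`. -/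
def subtractionCharPoly (t : ℕ) (k : ℕ → ℕ) (z : ℂ) : ℂ :=
  (t : ℂ) * z ^ (k t) + (∑ i ∈ Icc 1 (t - 1), z ^ (k t - k i)) + 1

lemma sum_inv_pow_eq_neg_of_subtractionCharPoly_eq_zero {t : ℕ} {k : ℕ → ℕ}
    (hk : ∀ i ∈ Icc 1 t, k i ≤ k t) {z : ℂ} (hz : z ≠ 0) (hroot : subtractionCharPoly t k z = 0) :
    ∑ i ∈ Icc 1 t, z⁻¹ ^ k i = -(t : ℂ) := by
  obtain _ | t := t
  · simp [subtractionCharPoly] at hroot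
  have hpow : ∀ i ∈ Icc 1 t, z ^ (k (t + 1) - k i) * z⁻¹ ^ k (t + 1) = z⁻¹ ^ k i := by
    intro i hi
    have hki : k i ≤ k (t + 1) := hk i (Icc_subset_Icc_right t.le_succ hi)
    rw [← Nat.add_sub_cancel' hki, pow_add, Nat.add_sub_cancel_left, ← mul_assoc, mul_comm,
      ← mul_assoc, ← mul_pow, inv_mul_cancel₀ hz, one_pow, one_mul]
  have hlead : z ^ k (t + 1) * z⁻¹ ^ k (t + 1) = 1 := by rw [← mul_pow, mul_inv_cancel₀ hz, one_pow]
  have hscaled := congrArg (· * z⁻¹ ^ k (t + 1)) hroot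
  simp only [subtractionCharPoly, Nat.add_sub_cancel, add_mul, sum_mul, sum_congr rfl hpow,
    zero_mul] at hscaled
  rw [sum_Icc_succ_top (by omega)]
  push_cast at hscaled ⊢
  linear_combination hscaled - (t + 1 : ℂ) * hlead

lemma inv_pow_eq_neg_one_of_subtractionCharPoly_eq_zero {t : ℕ} {k : ℕ → ℕ}
    (hk : ∀ i ∈ Icc 1 t, k i ≤ k t) {z : ℂ} (hz : 1 ≤ ‖z‖) (hroot : subtractionCharPoly t k z = 0) :
    ∀ i ∈ Icc 1 t, z⁻¹ ^ k i = -1 := by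
  have hz0 : z ≠ 0 := norm_pos_iff.1 (one_pos.trans_le hz)
  refine Complex.eq_neg_one_of_sum_eq_neg_card (fun i _ => ?_) ?_
  · rw [norm_pow, norm_inv]
    exact pow_le_one₀ (by positivity) (inv_le_one_of_one_le₀ hz)
  · rw [sum_inv_pow_eq_neg_of_subtractionCharPoly_eq_zero hk hz0 hroot, Nat.card_Icc,
      Nat.add_sub_cancel]

theorem stmt10_general (t : ℕ) (k : ℕ → ℕ)
    (hmono : ∀ i j, 1 ≤ i → i < j → j ≤ t → k i < k j)
    (hgcd : Finset.gcd (Finset.Icc 1 t) k = 1) :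
    (∀ z : ℂ, (t : ℂ) * z ^ (k t) + (∑ i ∈ Finset.Icc 1 (t - 1), z ^ (k t - k i)) + 1 = 0 →
      z = -1 ∨ ‖z‖ < 1) ∧
    (((t : ℂ) * (-1 : ℂ) ^ (k t) + (∑ i ∈ Finset.Icc 1 (t - 1), (-1 : ℂ) ^ (k t - k i)) + 1 = 0) →
      ∀ i, 1 ≤ i → i ≤ t → Odd (k i)) := by
  have hk : ∀ i ∈ Icc 1 t, k i ≤ k t := fun i hi => by
    obtain ⟨h1, h2⟩ := mem_Icc.1 hi
    rcases h2.lt_or_eq with h | rfl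
    exacts [(hmono i t h1 h le_rfl).le, le_rfl]
  refine ⟨fun z hroot => ?_, fun hroot i h1 h2 => ?_⟩
  · refine (lt_or_ge ‖z‖ 1).elim Or.inr fun hz => Or.inl ?_
    rw [← inv_inj, inv_neg_one]
    exact eq_neg_one_of_forall_pow_eq_neg_one hgcd
      (inv_pow_eq_neg_one_of_subtractionCharPoly_eq_zero hk hz hroot)
  · have h := inv_pow_eq_neg_one_of_subtractionCharPoly_eq_zero hk (by simp) hroot i
      (mem_Icc.2 ⟨h1, h2⟩)
    rwa [inv_neg_one, neg_one_pow_eq_neg_one_iff_odd (by norm_num)] at h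

theorem stmt10 (t : ℕ) (ht : 2 ≤ t) (k : ℕ → ℕ)
    (hmono : ∀ i j, 1 ≤ i → i < j → j ≤ t → k i < k j)
    (hk1 : 1 ≤ k 1)
    (hgcd : Finset.gcd (Finset.Icc 1 t) k = 1) :
    (∀ z : ℂ, (t : ℂ) * z ^ (k t) + (∑ i ∈ Finset.Icc 1 (t - 1), z ^ (k t - k i)) + 1 = 0 →
      z = -1 ∨ ‖z‖ < 1) ∧
    (((t : ℂ) * (-1 : ℂ) ^ (k t) + (∑ i ∈ Finset.Icc 1 (t - 1), (-1 : ℂ) ^ (k t - k i)) + 1 = 0) →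
      ∀ i, 1 ≤ i → i ≤ t → Odd (k i)) :=
  stmt10_general t k hmono hgcd
end

section
/- Let t ≥ 2 and let k_1 < k_2 < ... < k_t be odd natural numbers. Then z = -1 is a simple root of χ_S(x) = t·x^{k_t} + ∑_{i=1}^{t-1} x^{k_t - k_i} + 1; more precisely, χ_S(-1) = 0 and χ_S'(-1) = k_1 + k_2 + ... + k_t ≠ 0. -/
/-! All exponents `k t - k i` are even and `k t` is odd, so `χ_S(-1) = -t + (t - 1) + 1 = 0`,
while each middle term of `χ_S'(-1)` contributes `k i - k t`, giving
`t * k t + ∑_{i < t} (k i - k t) = ∑_i k i`, which is positive since `k 1` is odd. -/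

open Finset

theorem neg_one_pow_sub_of_odd {R : Type*} [Monoid R] [HasDistribNeg R] {a b : ℕ}
    (ha : Odd a) (hb : Odd b) : (-1 : R) ^ (a - b) = 1 :=
  (Nat.Odd.sub_odd ha hb).neg_one_pow

theorem cast_sub_mul_neg_one_pow_pred_of_odd {R : Type*} [Ring R] {a b : ℕ}
    (ha : Odd a) (hb : Odd b) (hba : b < a) :
    ((a - b : ℕ) : R) * (-1) ^ (a - b - 1) = b - a := by
  have hodd : Odd (a - b - 1) := Nat.Even.sub_odd (by omega) (Nat.Odd.sub_odd ha hb) odd_one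
  rw [hodd.neg_one_pow, Nat.cast_sub hba.le]
  noncomm_ring

theorem stmt11 (t : ℕ) (ht : 2 ≤ t) (k : ℕ → ℕ)
    (hmono : ∀ i j, 1 ≤ i → i < j → j ≤ t → k i < k j)
    (hodd : ∀ i, 1 ≤ i → i ≤ t → Odd (k i)) :
    ((t : ℂ) * (-1 : ℂ) ^ (k t) + (∑ i ∈ Finset.Icc 1 (t - 1), (-1 : ℂ) ^ (k t - k i)) + 1 = 0) ∧
    ((t : ℂ) * (k t : ℂ) * (-1 : ℂ) ^ (k t - 1) +
        ∑ i ∈ Finset.Icc 1 (t - 1), ((k t - k i : ℕ) : ℂ) * (-1 : ℂ) ^ (k t - k i - 1) =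
      ∑ i ∈ Finset.Icc 1 t, (k i : ℂ)) ∧
    (∑ i ∈ Finset.Icc 1 t, k i) ≠ 0 := by
  obtain ⟨s, rfl⟩ : ∃ s, t = s + 1 := ⟨t - 1, by omega⟩
  simp only [Nat.add_sub_cancel] at *
  have hlast : Odd (k (s + 1)) := hodd (s + 1) (by omega) le_rfl
  have hodd' : ∀ i ∈ Icc 1 s, Odd (k i) := fun i hi ↦ hodd i (mem_Icc.1 hi).1 (by grind)
  have hlt : ∀ i ∈ Icc 1 s, k i < k (s + 1) := fun i hi ↦
    hmono i (s + 1) (mem_Icc.1 hi).1 (by grind) le_rfl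
  refine ⟨?_, ?_, ?_⟩
  · rw [hlast.neg_one_pow, sum_congr rfl fun i hi ↦ neg_one_pow_sub_of_odd hlast (hodd' i hi),
      sum_const, Nat.card_Icc, nsmul_one]
    push_cast
    ring
  · rw [(Nat.Odd.sub_odd hlast odd_one).neg_one_pow, sum_congr rfl fun i hi ↦
        cast_sub_mul_neg_one_pow_pred_of_odd hlast (hodd' i hi) (hlt i hi),
      sum_sub_distrib, sum_const, Nat.card_Icc, nsmul_eq_mul,
      sum_Icc_succ_top (by omega : 1 ≤ s + 1)]
    push_cast
    ring
  · exact (sum_pos' (fun i _ ↦ Nat.zero_le _)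
      ⟨1, mem_Icc.2 ⟨le_rfl, by omega⟩, (hodd 1 le_rfl (by omega)).pos⟩).ne'
end

section
/- Let t ≥ 2 and let k_1 < k_2 < ... < k_t be natural numbers with 1 ≤ k_1, gcd(k_1, ..., k_t) = 1, and at least one k_i even. Then any real sequence a : ℕ → ℝ satisfying a(n) = 1 - (1/t)·∑_{i=1}^{t} a(n - k_i) for all n ≥ k_t converges to 1/2 as n → ∞. -/
/-!
After the shift `b = a - 1/2` the recurrence becomes `b n = -∑ wᵢ b (n - kᵢ)` with nonnegative
weights of total mass at most one. Unfolding it `m` times along a single step `k` shows that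
`b n` is within `(1 - w ^ m) M` of `(-w) ^ m b (n - m k)`, where `M` bounds `b` on the preceding
window. As the steps have gcd one, some step `kₒ` is odd; with an even step `kₑ`, the point
`n - kₒ kₑ` is reached both by `kₒ` copies of `kₑ` and by `kₑ` copies of `kₒ`, with opposite
signs. The two approximations of `b n` then force `|b n| ≤ (1 - q) M` for a fixed `q > 0`, so
`b` decays geometrically.
-/

open Filter Topology

lemma Finset.exists_odd_of_gcd_eq_one {ι : Type*} {s : Finset ι} {f : ι → ℕ}
    (h : s.gcd f = 1) : ∃ i ∈ s, Odd (f i) := by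
  by_contra! hodd
  have : 2 ∣ s.gcd f := Finset.dvd_gcd fun i hi => (Nat.not_odd_iff_even.mp (hodd i hi)).two_dvd
  rw [h] at this
  exact absurd this (by norm_num)

lemma abs_sum_mul_le_sum_mul {ι : Type*} {s : Finset ι} {w x : ι → ℝ} {M : ℝ}
    (hw : ∀ i ∈ s, 0 ≤ w i) (hx : ∀ i ∈ s, |x i| ≤ M) :
    |∑ i ∈ s, w i * x i| ≤ (∑ i ∈ s, w i) * M := by
  calc |∑ i ∈ s, w i * x i| ≤ ∑ i ∈ s, |w i * x i| := Finset.abs_sum_le_sum_abs _ _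
    _ ≤ ∑ i ∈ s, w i * M := Finset.sum_le_sum fun i hi => by
        rw [abs_mul, abs_of_nonneg (hw i hi)]
        exact mul_le_mul_of_nonneg_left (hx i hi) (hw i hi)
    _ = (∑ i ∈ s, w i) * M := (Finset.sum_mul _ _ _).symm

lemma abs_le_one_sub_min_mul {x c p r M : ℝ} (hp : 0 ≤ p) (hr : 0 ≤ r) (hM : 0 ≤ M)
    (h₁ : |x + p * c| ≤ (1 - p) * M) (h₂ : |x - r * c| ≤ (1 - r) * M) :
    |x| ≤ (1 - min p r) * M := by
  have hmp : min p r * M ≤ p * M := mul_le_mul_of_nonneg_right (min_le_left p r) hM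
  have hmr : min p r * M ≤ r * M := mul_le_mul_of_nonneg_right (min_le_right p r) hM
  rw [abs_le] at h₁ h₂ ⊢
  rcases le_total 0 c with hc | hc
  · constructor <;> nlinarith [mul_nonneg hp hc, mul_nonneg hr hc]
  · constructor <;> nlinarith [mul_nonneg hp (neg_nonneg.mpr hc), mul_nonneg hr (neg_nonneg.mpr hc)]

lemma tendsto_zero_of_abs_le_mul_window {b : ℕ → ℝ} {W : ℕ} {ρ B : ℝ} (hρ₀ : 0 ≤ ρ)
    (hρ₁ : ρ < 1) (hB : ∀ n, |b n| ≤ B)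
    (hcontr : ∀ n M, W ≤ n → 0 ≤ M → (∀ j, n - W ≤ j → j < n → |b j| ≤ M) → |b n| ≤ ρ * M) :
    Tendsto b atTop (𝓝 0) := by
  have hB₀ : 0 ≤ B := (abs_nonneg _).trans (hB 0)
  have hgeom : ∀ r n, r * W ≤ n → |b n| ≤ ρ ^ r * B := by
    intro r
    induction r with
    | zero => simpa using hB
    | succ r ih =>
      intro n hn
      rw [pow_succ', mul_assoc]
      rw [add_one_mul] at hn
      exact hcontr n _ (by omega) (by positivity) fun j hj _ => ih j (by omega)
  have hlim : Tendsto (fun r : ℕ => ρ ^ r * B) atTop (𝓝 0) := by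
    simpa using (tendsto_pow_atTop_nhds_zero_of_lt_one hρ₀ hρ₁).mul_const B
  rw [Metric.tendsto_atTop]
  intro ε hε
  obtain ⟨r, hr⟩ := (hlim.eventually_lt_const hε).exists
  exact ⟨r * W, fun n hn => by simpa using (hgeom r n hn).trans_lt hr⟩

section NegWeightedRecurrence

variable {ι : Type*} {s : Finset ι} {w : ι → ℝ} {k : ι → ℕ} {K : ℕ} {b : ℕ → ℝ}

lemma abs_le_sum_range_of_neg_weighted_recurrence (hw : ∀ i ∈ s, 0 ≤ w i)
    (hw₁ : ∑ i ∈ s, w i ≤ 1) (hk : ∀ i ∈ s, 1 ≤ k i ∧ k i ≤ K)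
    (hb : ∀ n, K ≤ n → b n = -∑ i ∈ s, w i * b (n - k i)) (n : ℕ) :
    |b n| ≤ ∑ j ∈ Finset.range K, |b j| := by
  set B := ∑ j ∈ Finset.range K, |b j|
  induction n using Nat.strong_induction_on with
  | _ n ih =>
    rcases lt_or_ge n K with hn | hn
    · exact Finset.single_le_sum (f := fun j => |b j|) (fun _ _ => abs_nonneg _)
        (Finset.mem_range.mpr hn)
    have hB : 0 ≤ B := Finset.sum_nonneg fun _ _ => abs_nonneg _
    calc |b n| = |∑ i ∈ s, w i * b (n - k i)| := by rw [hb n hn, abs_neg]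
      _ ≤ (∑ i ∈ s, w i) * B :=
        abs_sum_mul_le_sum_mul hw fun i hi => ih _ (by have := hk i hi; omega)
      _ ≤ B := mul_le_of_le_one_left hB hw₁

lemma abs_sub_neg_pow_mul_le_of_neg_weighted_recurrence (hw : ∀ i ∈ s, 0 ≤ w i)
    (hw₁ : ∑ i ∈ s, w i ≤ 1) (hk : ∀ i ∈ s, 1 ≤ k i ∧ k i ≤ K)
    (hb : ∀ n, K ≤ n → b n = -∑ i ∈ s, w i * b (n - k i)) {i : ι} (hi : i ∈ s) {M : ℝ}
    (hM : 0 ≤ M) (m : ℕ) {n : ℕ} (hn : m * K ≤ n)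
    (hwin : ∀ j, n - m * K ≤ j → j < n → |b j| ≤ M) :
    |b n - (-w i) ^ m * b (n - m * k i)| ≤ (1 - w i ^ m) * M := by
  classical
  induction m generalizing n with
  | zero => simp
  | succ m ih =>
    have hki := hk i hi
    rw [add_one_mul] at hn hwin
    have hrest : |∑ j ∈ s.erase i, w j * b (n - k j)| ≤ (1 - w i) * M := by
      refine (abs_sum_mul_le_sum_mul (fun j hj => hw j (Finset.mem_of_mem_erase hj))
        fun j hj => ?_).trans (mul_le_mul_of_nonneg_right ?_ hM)
      · have := hk j (Finset.mem_of_mem_erase hj)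
        exact hwin _ (by omega) (by omega)
      · linarith [Finset.add_sum_erase s w hi]
    have hstep := ih (n := n - k i) (by omega) fun j hj₁ hj₂ => hwin j (by omega) (by omega)
    rw [Nat.sub_sub, ← one_add_mul, add_comm 1 m] at hstep
    have hsplit : b n - (-w i) ^ (m + 1) * b (n - (m + 1) * k i) =
        -(w i * (b (n - k i) - (-w i) ^ m * b (n - (m + 1) * k i))) -
          ∑ j ∈ s.erase i, w j * b (n - k j) := by
      rw [hb n (by omega), ← Finset.add_sum_erase s _ hi]
      ring
    calc |b n - (-w i) ^ (m + 1) * b (n - (m + 1) * k i)|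
        ≤ w i * |b (n - k i) - (-w i) ^ m * b (n - (m + 1) * k i)| +
          |∑ j ∈ s.erase i, w j * b (n - k j)| := by
          rw [hsplit]
          refine (abs_sub _ _).trans_eq ?_
          rw [abs_neg, abs_mul, abs_of_nonneg (hw i hi)]
      _ ≤ w i * ((1 - w i ^ m) * M) + (1 - w i) * M :=
          add_le_add (mul_le_mul_of_nonneg_left hstep (hw i hi)) hrest
      _ = (1 - w i ^ (m + 1)) * M := by ring

lemma tendsto_zero_of_neg_weighted_recurrence (hw : ∀ i ∈ s, 0 ≤ w i)
    (hw₁ : ∑ i ∈ s, w i ≤ 1) (hk : ∀ i ∈ s, 1 ≤ k i ∧ k i ≤ K)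
    (hb : ∀ n, K ≤ n → b n = -∑ i ∈ s, w i * b (n - k i)) {o e : ι} (ho : o ∈ s) (he : e ∈ s)
    (hwo : 0 < w o) (hwe : 0 < w e) (hko : Odd (k o)) (hke : Even (k e)) :
    Tendsto b atTop (𝓝 0) := by
  set q := min (w e ^ k o) (w o ^ k e)
  have hq₀ : 0 < q := lt_min (pow_pos hwe _) (pow_pos hwo _)
  have hq₁ : q ≤ 1 :=
    (min_le_left _ _).trans (pow_le_one₀ hwe.le ((Finset.single_le_sum hw he).trans hw₁))
  refine tendsto_zero_of_abs_le_mul_window (W := (k o + k e) * K) (ρ := 1 - q)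
    (by linarith) (by linarith) (abs_le_sum_range_of_neg_weighted_recurrence hw hw₁ hk hb)
    fun n M hn hM hwin => ?_
  rw [add_mul] at hn hwin
  have h₁ := abs_sub_neg_pow_mul_le_of_neg_weighted_recurrence hw hw₁ hk hb he hM (k o)
    (by omega) fun j hj₁ hj₂ => hwin j (by omega) hj₂
  have h₂ := abs_sub_neg_pow_mul_le_of_neg_weighted_recurrence hw hw₁ hk hb ho hM (k e)
    (by omega) fun j hj₁ hj₂ => hwin j (by omega) hj₂
  rw [hko.neg_pow, neg_mul, sub_neg_eq_add] at h₁
  rw [hke.neg_pow, mul_comm (k e) (k o)] at h₂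
  exact abs_le_one_sub_min_mul (pow_nonneg hwe.le _) (pow_nonneg hwo.le _) hM h₁ h₂

end NegWeightedRecurrence

theorem stmt12_general (t : ℕ) (k : ℕ → ℕ)
    (hmono : ∀ i j, 1 ≤ i → i < j → j ≤ t → k i < k j)
    (hk1 : 1 ≤ k 1)
    (hgcd : Finset.gcd (Finset.Icc 1 t) k = 1)
    (heven : ∃ i, 1 ≤ i ∧ i ≤ t ∧ Even (k i))
    (a : ℕ → ℝ)
    (hrec : ∀ n, k t ≤ n → a n = 1 - (1 / (t : ℝ)) * ∑ i ∈ Finset.Icc 1 t, a (n - k i)) :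
    Tendsto a atTop (nhds (1 / 2)) := by
  obtain ⟨e, he₁, het, hke⟩ := heven
  obtain ⟨o, ho, hko⟩ := Finset.exists_odd_of_gcd_eq_one hgcd
  have ht₀ : (0 : ℝ) < t := by exact_mod_cast he₁.trans het
  have hmonoOn : MonotoneOn k (Set.Icc 1 t) :=
    StrictMonoOn.monotoneOn fun i hi j hj hij => hmono i j hi.1 hij hj.2
  have hk : ∀ i ∈ Finset.Icc 1 t, 1 ≤ k i ∧ k i ≤ k t := fun i hi => by
    rw [Finset.mem_Icc] at hi
    exact ⟨hk1.trans (hmonoOn ⟨le_rfl, hi.1.trans hi.2⟩ hi hi.1),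
      hmonoOn hi ⟨hi.1.trans hi.2, le_rfl⟩ hi.2⟩
  have hw₁ : ∑ _i ∈ Finset.Icc 1 t, 1 / (t : ℝ) ≤ 1 := by
    simp [field]
  have hb : ∀ n, k t ≤ n →
      a n - 1 / 2 = -∑ i ∈ Finset.Icc 1 t, 1 / (t : ℝ) * (a (n - k i) - 1 / 2) := by
    intro n hn
    rw [hrec n hn, ← Finset.mul_sum, Finset.sum_sub_distrib, Finset.sum_const, Nat.card_Icc,
      nsmul_eq_mul, Nat.add_sub_cancel]
    field_simp
    ring
  have hlim := tendsto_zero_of_neg_weighted_recurrence (fun _ _ => by positivity) hw₁ hk hb ho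
    (Finset.mem_Icc.mpr ⟨he₁, het⟩) (by positivity) (by positivity) hko hke
  convert hlim.add_const (1 / 2) using 2 <;> simp

theorem stmt12 (t : ℕ) (ht : 2 ≤ t) (k : ℕ → ℕ)
    (hmono : ∀ i j, 1 ≤ i → i < j → j ≤ t → k i < k j)
    (hk1 : 1 ≤ k 1)
    (hgcd : Finset.gcd (Finset.Icc 1 t) k = 1)
    (heven : ∃ i, 1 ≤ i ∧ i ≤ t ∧ Even (k i))
    (a : ℕ → ℝ)
    (hrec : ∀ n, k t ≤ n → a n = 1 - (1 / (t : ℝ)) * ∑ i ∈ Finset.Icc 1 t, a (n - k i)) :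
    Tendsto a atTop (nhds (1 / 2)) :=
  stmt12_general t k hmono hk1 hgcd heven a hrec
end

section
/- Let t ≥ 2 and let k_1 < k_2 < ... < k_t be odd natural numbers, and set k_0 := 0. Then for every complex number x, (x+1)·∑_{j=1}^{t} j·(∑_{i=k_t - k_{t-j+1}}^{k_t - k_{t-j} - 1} (-1)^i x^i) = t·x^{k_t} + ∑_{i=1}^{t-1} x^{k_t - k_i} + 1. -/
/-!
Multiplying by `x + 1` telescopes each alternating block `∑_{a ≤ i < b} (-x)^i` to
`(-x)^a - (-x)^b`. Summation by parts then turns the weighted sum into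
`∑_{i=1}^{t} (-x)^(k_t - k_i) - t (-x)^(k_t)`, and since all `k_i` are odd, `k_t - k_i` is even
for `i ≥ 1` while `k_t - k_0 = k_t` is odd, which fixes every sign.
-/

open Finset

theorem mul_sum_Ico_neg_one_pow_mul_pow {R : Type*} [CommRing R] (x : R) {a b : ℕ} (hab : a ≤ b) :
    (x + 1) * ∑ i ∈ Ico a b, (-1 : R) ^ i * x ^ i = (-x) ^ a - (-x) ^ b := by
  simp_rw [← mul_pow, neg_one_mul]
  rw [mul_comm, ← geom_sum_Ico_mul_neg _ hab, sub_neg_eq_add, add_comm]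

theorem sum_Icc_natCast_mul_sub_reflect {R : Type*} [CommRing R] (t : ℕ) (F : ℕ → R) :
    ∑ j ∈ Icc 1 t, (j : R) * (F (t - j + 1) - F (t - j)) = ∑ i ∈ Icc 1 t, F i - t * F 0 := by
  induction t generalizing F with
  | zero => simp
  | succ t ih =>
    have hshift : ∑ j ∈ Icc 1 t, (j : R) * (F (t + 1 - j + 1) - F (t + 1 - j))
        = ∑ i ∈ Icc 1 t, F (i + 1) - t * F 1 := by
      rw [← ih (fun i => F (i + 1))]
      exact sum_congr rfl fun j hj => by rw [Nat.sub_add_comm (mem_Icc.1 hj).2]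
    have htelescope : ∑ i ∈ Icc 1 t, F (i + 1) - ∑ i ∈ Icc 1 t, F i = F (t + 1) - F 1 := by
      rw [← sum_sub_distrib, ← Ico_add_one_right_eq_Icc, sum_Ico_sub F (by omega)]
    rw [sum_Icc_succ_top (by omega), hshift, sum_Icc_succ_top (by omega), Nat.sub_self,
      Nat.cast_succ]
    linear_combination htelescope

theorem map_le_map_of_map_zero_eq_zero {k : ℕ → ℕ} {t : ℕ} (hk0 : k 0 = 0)
    (hmono : ∀ i j, 1 ≤ i → i < j → j ≤ t → k i < k j) {i j : ℕ} (hij : i ≤ j) (hjt : j ≤ t) :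
    k i ≤ k j := by
  rcases Nat.eq_zero_or_pos i with rfl | hi
  · simp [hk0]
  rcases hij.eq_or_lt with rfl | hlt
  · rfl
  · exact (hmono i j hi hlt hjt).le

theorem stmt14 (t : ℕ) (ht : 2 ≤ t) (k : ℕ → ℕ) (hk0 : k 0 = 0)
    (hmono : ∀ i j, 1 ≤ i → i < j → j ≤ t → k i < k j)
    (hodd : ∀ i, 1 ≤ i → i ≤ t → Odd (k i)) :
    ∀ x : ℂ, (x + 1) *
        ∑ j ∈ Finset.Icc 1 t, (j : ℂ) *
          ∑ i ∈ Finset.Ico (k t - k (t - j + 1)) (k t - k (t - j)), (-1 : ℂ) ^ i * x ^ i =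
      (t : ℂ) * x ^ (k t) + (∑ i ∈ Finset.Icc 1 (t - 1), x ^ (k t - k i)) + 1 := by
  intro x
  set F : ℕ → ℂ := fun i => (-x) ^ (k t - k i)
  have hblocks : (x + 1) * ∑ j ∈ Icc 1 t, (j : ℂ) *
      ∑ i ∈ Ico (k t - k (t - j + 1)) (k t - k (t - j)), (-1 : ℂ) ^ i * x ^ i
      = ∑ j ∈ Icc 1 t, (j : ℂ) * (F (t - j + 1) - F (t - j)) := by
    rw [mul_sum]
    refine sum_congr rfl fun j hj => ?_
    rw [mul_left_comm, mul_sum_Ico_neg_one_pow_mul_pow x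
      (Nat.sub_le_sub_left (map_le_map_of_map_zero_eq_zero hk0 hmono (Nat.le_succ _) (by grind)) _)]
  have hF0 : F 0 = -x ^ k t := by simp [F, hk0, (hodd t (by omega) le_rfl).neg_pow]
  have hFt : F t = 1 := by simp [F]
  have hFeven : ∀ i ∈ Icc 1 (t - 1), F i = x ^ (k t - k i) := fun i hi =>
    (Nat.Odd.sub_odd (hodd t (by omega) le_rfl) (hodd i (mem_Icc.1 hi).1 (by grind))).neg_pow x
  have hsplit : ∑ i ∈ Icc 1 t, F i = ∑ i ∈ Icc 1 (t - 1), x ^ (k t - k i) + 1 := by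
    conv_lhs => rw [← Nat.sub_add_cancel (by omega : 1 ≤ t)]
    rw [sum_Icc_succ_top (by omega), Nat.sub_add_cancel (by omega), hFt, sum_congr rfl hFeven]
  rw [hblocks, sum_Icc_natCast_mul_sub_reflect, hsplit, hF0]
  ring
end
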